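/- arXiv:1702.05813 — 4 statements merged into one kernel-verified Lean document; each statement's English description precedes it below -/
import Mathlib

section
/- For every ν > -1/2, the Bessel function J_ν defined by the Poisson representation formula satisfies the Bessel differential equation: for all r > 0, r²·J_ν''(r) + r·J_ν'(r) + (r² − ν²)·J_ν(r) = 0. -/
/-- The Bessel function of order `ν`, defined for `r > 0` by the Poisson
representation formula
`J_ν(r) = (r/2)^ν / (Γ(ν+1/2)·Γ(1/2)) · ∫_{-1}^{1} e^{isr} (1−s²)^{ν−1/2} ds`. -/
noncomputable def besselJ (ν : ℝ) (r : ℝ) : ℂ :=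
  (((r / 2) ^ ν / (Real.Gamma (ν + 1 / 2) * Real.Gamma (1 / 2)) : ℝ) : ℂ) *
    ∫ s in (-1 : ℝ)..(1 : ℝ),
      Complex.exp (Complex.I * (s : ℂ) * (r : ℂ)) * (((1 - s ^ 2) ^ (ν - 1 / 2) : ℝ) : ℂ)

/-!
For `x > 0` we have `J_ν(x) = c · x^ν · M₀(x)` with
`M_k(x) = ∫_{-1}^{1} (is)^k e^{isx} (1 - s²)^{ν-1/2} ds`, and differentiating under the integral
sign gives `M_k' = M_{k+1}`. Bessel's operator sends `x^ν g(x)` to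
`x^{ν+1} (x (g + g'') + (2ν + 1) g')`, and for `g = M₀` this vanishes because
`x (M₀ + M₂) + (2ν + 1) M₁` is the integral of `-i · d/ds [e^{isx} (1 - s²)^{ν+1/2}]`
over `[-1, 1]`.
-/

open MeasureTheory Complex Filter Topology Set intervalIntegral

lemma hasDerivAt_cexp_const_mul_ofReal (c : ℂ) (x : ℝ) :
    HasDerivAt (fun x : ℝ => exp (c * x)) (c * exp (c * x)) x := by
  simpa [mul_comm] using ((hasDerivAt_id (x : ℂ)).const_mul c).cexp.comp_ofReal

lemma intervalIntegrable_one_sub_sq_rpow {p : ℝ} (hp : -1 < p) :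
    IntervalIntegrable (fun s : ℝ => (1 - s ^ 2) ^ p) volume (-1) 1 := by
  have h_one_sub : IntervalIntegrable (fun s : ℝ => (1 - s) ^ p) volume 0 1 := by
    simpa using ((intervalIntegrable_rpow' (a := 0) (b := 1) hp).comp_sub_left 1).symm
  have h_one_add : ContinuousOn (fun s : ℝ => (1 + s) ^ p) (uIcc 0 1) := fun s hs => by
    rw [uIcc_of_le zero_le_one] at hs
    exact ((Real.continuousAt_rpow_const _ p (Or.inl (by linarith [hs.1]))).comp
      (by fun_prop)).continuousWithinAt
  have h_right : IntervalIntegrable (fun s : ℝ => (1 - s ^ 2) ^ p) volume 0 1 := by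
    refine (h_one_sub.continuousOn_mul h_one_add).congr fun s hs => ?_
    rw [uIoc_of_le zero_le_one] at hs
    rw [← Real.mul_rpow (by linarith [hs.1]) (by linarith [hs.2])]
    ring_nf
  have h_left : IntervalIntegrable (fun s : ℝ => (1 - s ^ 2) ^ p) volume (-1) 0 := by
    simpa using ((IntervalIntegrable.iff_comp_neg).mp h_right).symm
  exact h_left.trans h_right

noncomputable def fourierMoment (w : ℝ → ℂ) (k : ℕ) (r : ℝ) : ℂ :=
  ∫ s in (-1 : ℝ)..1, (I * s) ^ k * exp (I * s * r) * w s

section fourierMoment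

variable {w : ℝ → ℂ}

lemma intervalIntegrable_fourierMoment_integrand (hw : IntervalIntegrable w volume (-1) 1)
    (k : ℕ) (r : ℝ) :
    IntervalIntegrable (fun s : ℝ => (I * s) ^ k * exp (I * s * r) * w s) volume (-1) 1 :=
  hw.continuousOn_mul (by fun_prop)

lemma hasDerivAt_fourierMoment (hw : IntervalIntegrable w volume (-1) 1) (k : ℕ) (r : ℝ) :
    HasDerivAt (fourierMoment w k) (fourierMoment w (k + 1) r) r := by
  have h_meas : ∀ (m : ℕ) (x : ℝ), AEStronglyMeasurable
      (fun s : ℝ => (I * s) ^ m * exp (I * s * x) * w s) (volume.restrict (uIoc (-1 : ℝ) 1)) :=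
    fun m x => (Continuous.aestronglyMeasurable (by fun_prop)).mul hw.def'.aestronglyMeasurable
  refine (intervalIntegral.hasDerivAt_integral_of_dominated_loc_of_deriv_le
    (F' := fun (x : ℝ) (s : ℝ) => (I * s) ^ (k + 1) * exp (I * s * x) * w s)
    (bound := fun s => ‖w s‖) (Metric.ball_mem_nhds r one_pos)
    (Eventually.of_forall (h_meas k)) (intervalIntegrable_fourierMoment_integrand hw k r)
    (h_meas (k + 1) r) ?_ hw.norm ?_).2
  · refine Eventually.of_forall fun s hs x _ => ?_
    rw [uIoc_of_le (by norm_num)] at hs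
    have hs_abs : |s| ≤ 1 := abs_le.mpr ⟨hs.1.le, hs.2⟩
    calc ‖(I * s) ^ (k + 1) * exp (I * s * x) * w s‖ = |s| ^ (k + 1) * ‖w s‖ := by
          simp [norm_exp]
      _ ≤ ‖w s‖ := mul_le_of_le_one_left (norm_nonneg _) (pow_le_one₀ (abs_nonneg s) hs_abs)
  · exact Eventually.of_forall fun s _ x _ =>
      (((hasDerivAt_cexp_const_mul_ofReal (I * s) x).const_mul ((I * s) ^ k)).mul_const
        (w s)).congr_deriv (by ring)

end fourierMoment

noncomputable def poissonWeight (p s : ℝ) : ℂ := ((1 - s ^ 2) ^ p : ℝ)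

lemma intervalIntegrable_poissonWeight {p : ℝ} (hp : -1 < p) :
    IntervalIntegrable (poissonWeight p) volume (-1) 1 := by
  have h := intervalIntegrable_one_sub_sq_rpow hp
  rw [intervalIntegrable_iff] at h ⊢
  exact h.ofReal

theorem fourierMoment_poissonWeight_recurrence {p : ℝ} (hp : -1 < p) (r : ℝ) :
    r * (fourierMoment (poissonWeight p) 0 r + fourierMoment (poissonWeight p) 2 r)
      + 2 * (p + 1) * fourierMoment (poissonWeight p) 1 r = 0 := by
  set f : ℕ → ℝ → ℂ := fun k s => (I * s) ^ k * exp (I * s * r) * poissonWeight p s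
  have hf : ∀ k, IntervalIntegrable (f k) volume (-1) 1 := fun k =>
    intervalIntegrable_fourierMoment_integrand (intervalIntegrable_poissonWeight hp) k r
  set G : ℝ → ℂ := fun s => -I * exp (I * r * s) * poissonWeight (p + 1) s
  have hG_cont : ContinuousOn G (Icc (-1) 1) := by
    have : Continuous fun s : ℝ => (1 - s ^ 2) ^ (p + 1) :=
      (by fun_prop : Continuous fun s : ℝ => 1 - s ^ 2).rpow_const fun _ => Or.inr (by linarith)
    unfold G poissonWeight
    fun_prop
  have hG_deriv : ∀ s ∈ Ioo (-1 : ℝ) 1,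
      HasDerivAt G (r * (f 0 s + f 2 s) + 2 * (p + 1) * f 1 s) s := by
    intro s hs
    have hs_ne : 1 - s ^ 2 ≠ 0 := by nlinarith [hs.1, hs.2]
    have h_weight := ((hasDerivAt_pow 2 s).const_sub 1).rpow_const (p := p + 1) (Or.inl hs_ne)
    refine (((hasDerivAt_cexp_const_mul_ofReal (I * r) s).const_mul (-I)).mul
      h_weight.ofReal_comp).congr_deriv ?_
    have h_succ : (1 - s ^ 2) ^ (p + 1) = (1 - s ^ 2) * (1 - s ^ 2) ^ p := by
      rw [Real.rpow_add_one hs_ne, mul_comm]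
    have h_exp : exp (I * r * s) = exp (I * s * r) := by ring_nf
    simp only [f, poissonWeight, h_succ, h_exp, add_sub_cancel_right]
    push_cast
    linear_combination -(r * exp (I * s * r) * (((1 - s ^ 2) ^ p : ℝ) : ℂ)) * I_sq
  calc _ = ∫ s in (-1 : ℝ)..1, r * (f 0 s + f 2 s) + 2 * (p + 1) * f 1 s := by
        rw [integral_add (((hf 0).add (hf 2)).const_mul _) ((hf 1).const_mul _),
          intervalIntegral.integral_const_mul, intervalIntegral.integral_const_mul,
          integral_add (hf 0) (hf 2)]
        rfl
    _ = G 1 - G (-1) := integral_eq_sub_of_hasDerivAt_of_le (by norm_num) hG_cont hG_deriv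
        ((((hf 0).add (hf 2)).const_mul _).add ((hf 1).const_mul _))
    _ = 0 := by simp [G, poissonWeight, Real.zero_rpow (by linarith : p + 1 ≠ 0)]

theorem bessel_operator_eq_of_eq_rpow_mul {f g g' g'' : ℝ → ℂ} {ν r : ℝ} (hr : 0 < r)
    (hf : ∀ x, 0 < x → f x = ((x ^ ν : ℝ) : ℂ) * g x)
    (hg : ∀ x, HasDerivAt g (g' x) x) (hg' : ∀ x, HasDerivAt g' (g'' x) x) :
    (r : ℂ) ^ 2 * deriv (deriv f) r + r * deriv f r
      + ((r : ℂ) ^ 2 - (ν : ℂ) ^ 2) * f r =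
      ((r ^ (ν + 1) : ℝ) : ℂ) * (r * (g r + g'' r) + (2 * ν + 1) * g' r) := by
  set f' : ℝ → ℂ := fun x =>
    ((ν * x ^ (ν - 1) : ℝ) : ℂ) * g x + ((x ^ ν : ℝ) : ℂ) * g' x
  have h_deriv : deriv f =ᶠ[𝓝 r] f' := by
    filter_upwards [Ioi_mem_nhds hr] with x (hx : 0 < x)
    have h_eq : f =ᶠ[𝓝 x] fun y => ((y ^ ν : ℝ) : ℂ) * g y :=
      eventually_of_mem (Ioi_mem_nhds hx) hf
    rw [h_eq.deriv_eq]
    exact ((Real.hasDerivAt_rpow_const (Or.inl hx.ne')).ofReal_comp.mul (hg x)).deriv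
  have h_deriv2 : HasDerivAt f'
      (((ν * ((ν - 1) * r ^ (ν - 1 - 1)) : ℝ) : ℂ) * g r
        + ((ν * r ^ (ν - 1) : ℝ) : ℂ) * g' r
        + (((ν * r ^ (ν - 1) : ℝ) : ℂ) * g' r + ((r ^ ν : ℝ) : ℂ) * g'' r)) r :=
    ((((Real.hasDerivAt_rpow_const (Or.inl hr.ne')).const_mul ν).ofReal_comp.mul (hg r)).add
      ((Real.hasDerivAt_rpow_const (Or.inl hr.ne')).ofReal_comp.mul (hg' r)))
  rw [h_deriv.deriv_eq.trans h_deriv2.deriv, h_deriv.self_of_nhds, hf r hr]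
  simp only [f', Real.rpow_add_one hr.ne', Real.rpow_sub_one hr.ne']
  have hr' : (r : ℂ) ≠ 0 := mod_cast hr.ne'
  push_cast
  field_simp
  ring

/-- For every `ν > -1/2`, the Bessel function `J_ν` satisfies the Bessel
differential equation `r²·J_ν''(r) + r·J_ν'(r) + (r² − ν²)·J_ν(r) = 0` for `r > 0`. -/
theorem besselJ_satisfies_bessel_ODE (ν : ℝ) (hν : ν > -1/2) (r : ℝ) (hr : r > 0) :
    (r : ℂ) ^ 2 * deriv (deriv (besselJ ν)) r + (r : ℂ) * deriv (besselJ ν) r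
      + ((r : ℂ) ^ 2 - (ν : ℂ) ^ 2) * besselJ ν r = 0 := by
  set M := fourierMoment (poissonWeight (ν - 1 / 2))
  set C : ℂ := (((2 ^ ν * Real.Gamma (ν + 1 / 2) * Real.Gamma (1 / 2))⁻¹ : ℝ) : ℂ)
  have h_weight := intervalIntegrable_poissonWeight (p := ν - 1 / 2) (by linarith)
  have h_poisson : ∀ x, 0 < x → besselJ ν x = ((x ^ ν : ℝ) : ℂ) * (C * M 0 x) := by
    intro x hx
    rw [besselJ, Real.div_rpow hx.le zero_le_two]
    simp only [M, fourierMoment, poissonWeight, C, pow_zero, one_mul]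
    push_cast
    ring
  rw [bessel_operator_eq_of_eq_rpow_mul hr h_poisson
    (fun x => (hasDerivAt_fourierMoment h_weight 0 x).const_mul C)
    (fun x => (hasDerivAt_fourierMoment h_weight 1 x).const_mul C)]
  have h_rec := fourierMoment_poissonWeight_recurrence (p := ν - 1 / 2) (by linarith) r
  push_cast at h_rec ⊢
  linear_combination ((r ^ (ν + 1) : ℝ) : ℂ) * C * h_rec
end

section
/- There exist constants C > 0, c > 0 and ν₀ ≥ 1 such that for every ν ≥ ν₀ and every r with 0 < r ≤ ν/2, the Bessel function satisfies the exponential decay estimate |J_ν(r)| ≤ C · e^{−c(ν + r)}. -/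
open MeasureTheory Set Real

theorem Real.exp_neg_add_one_mul_rpow_le_Gamma {x : ℝ} (hx : 1 ≤ x) :
    exp (-(x + 1)) * x ^ (x - 1) ≤ Gamma x := by
  have hx0 : 0 < x := by linarith
  have hint : IntegrableOn (fun t => exp (-t) * t ^ (x - 1)) (Ioi 0) :=
    GammaIntegral_convergent hx0
  have hsub : Ioc x (x + 1) ⊆ Ioi 0 := fun t ht => lt_of_lt_of_le hx0 ht.1.le
  calc exp (-(x + 1)) * x ^ (x - 1)
      = ∫ _ in Ioc x (x + 1), exp (-(x + 1)) * x ^ (x - 1) := by simp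
    _ ≤ ∫ t in Ioc x (x + 1), exp (-t) * t ^ (x - 1) := by
      refine setIntegral_mono_on (integrableOn_const (by simp)) (hint.mono_set hsub)
        measurableSet_Ioc fun t ht => ?_
      gcongr
      · exact ht.2
      · exact ht.1.le
    _ ≤ ∫ t in Ioi 0, exp (-t) * t ^ (x - 1) := by
      refine setIntegral_mono_set hint ?_ (.of_forall hsub)
      filter_upwards [ae_restrict_mem measurableSet_Ioi] with t (ht : 0 < t)
      positivity
    _ = Gamma x := (Gamma_eq_integral hx0).symm

theorem Real.one_le_Gamma_one_half : 1 ≤ Gamma (1 / 2) := by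
  rw [Gamma_one_half_eq, one_le_sqrt]
  linarith [pi_gt_three]

theorem Real.sqrt_le_exp_div_four {x : ℝ} (hx : 0 ≤ x) : √x ≤ exp (x / 4) := by
  have hsq : (√x) ^ 2 = x := sq_sqrt hx
  calc √x ≤ x / 4 + 1 := by nlinarith [sq_nonneg (√x - 2)]
    _ ≤ exp (x / 4) := add_one_le_exp _

theorem norm_besselJ_le {ν : ℝ} (hν : 1 / 2 ≤ ν) (r : ℝ) :
    ‖besselJ ν r‖ ≤ 2 * |(r / 2) ^ ν / (Gamma (ν + 1 / 2) * Gamma (1 / 2))| := by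
  have hintegrand : ∀ s ∈ uIoc (-1 : ℝ) 1,
      ‖Complex.exp (Complex.I * (s : ℂ) * (r : ℂ)) * (((1 - s ^ 2) ^ (ν - 1 / 2) : ℝ) : ℂ)‖ ≤ 1 := by
    intro s hs
    rw [uIoc_of_le (by norm_num)] at hs
    have h1s : 0 ≤ 1 - s ^ 2 := by nlinarith [hs.1, hs.2]
    rw [norm_mul, Complex.norm_exp, Complex.norm_real, norm_of_nonneg (rpow_nonneg h1s _)]
    simp only [Complex.mul_re, Complex.I_re, Complex.I_im, Complex.ofReal_re, Complex.ofReal_im]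
    simpa using rpow_le_one h1s (by nlinarith) (by linarith)
  have hintegral := intervalIntegral.norm_integral_le_of_norm_le_const hintegrand
  rw [besselJ, norm_mul, Complex.norm_real, norm_eq_abs, mul_comm 2]
  gcongr
  norm_num at hintegral
  exact hintegral

theorem besselJ_prefactor_le {ν r : ℝ} (hν : 1 / 2 ≤ ν) (hr : 0 ≤ r) (hrν : r ≤ ν / 2) :
    (r / 2) ^ ν / (Gamma (ν + 1 / 2) * Gamma (1 / 2)) ≤ exp (ν + 3 / 2) * √ν / 4 ^ ν := by
  have hν0 : 0 < ν := by linarith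
  have hnum : (r / 2) ^ ν ≤ ν ^ (ν - 1 / 2) * √ν / 4 ^ ν := by
    calc (r / 2) ^ ν ≤ (ν / 4) ^ ν := rpow_le_rpow (by positivity) (by linarith) hν0.le
      _ = ν ^ (ν - 1 / 2) * √ν / 4 ^ ν := by
        rw [div_rpow hν0.le (by norm_num), sqrt_eq_rpow, ← rpow_add hν0]
        norm_num
  have hden : exp (-(ν + 3 / 2)) * ν ^ (ν - 1 / 2) ≤ Gamma (ν + 1 / 2) * Gamma (1 / 2) := by
    calc exp (-(ν + 3 / 2)) * ν ^ (ν - 1 / 2)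
        ≤ exp (-(ν + 1 / 2 + 1)) * (ν + 1 / 2) ^ (ν + 1 / 2 - 1) := by
          rw [show ν + 1 / 2 + 1 = ν + 3 / 2 by ring, show ν + 1 / 2 - 1 = ν - 1 / 2 by ring]
          gcongr
          linarith
      _ ≤ Gamma (ν + 1 / 2) := exp_neg_add_one_mul_rpow_le_Gamma (by linarith)
      _ ≤ Gamma (ν + 1 / 2) * Gamma (1 / 2) :=
          le_mul_of_one_le_right (Gamma_pos_of_pos (by linarith)).le one_le_Gamma_one_half
  calc (r / 2) ^ ν / (Gamma (ν + 1 / 2) * Gamma (1 / 2))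
      ≤ ν ^ (ν - 1 / 2) * √ν / 4 ^ ν / (exp (-(ν + 3 / 2)) * ν ^ (ν - 1 / 2)) := by
        gcongr
      _ = exp (ν + 3 / 2) * √ν / 4 ^ ν := by
        rw [exp_neg]
        field_simp

theorem exp_mul_sqrt_div_four_rpow_le {ν : ℝ} (hν : 0 ≤ ν) :
    exp (ν + 3 / 2) * √ν / 4 ^ ν ≤ exp (3 / 2 - ν / 8) := by
  have hlog4 : 11 / 8 < log 4 := by
    rw [show (4 : ℝ) = 2 ^ 2 by norm_num, log_pow]
    linarith [log_two_gt_d9]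
  calc exp (ν + 3 / 2) * √ν / 4 ^ ν ≤ exp (ν + 3 / 2) * exp (ν / 4) / exp (log 4 * ν) := by
        rw [← rpow_def_of_pos (by norm_num)]
        gcongr
        exact sqrt_le_exp_div_four hν
    _ = exp (3 / 2 + (5 / 4 - log 4) * ν) := by
        rw [← exp_add, ← exp_sub]
        ring_nf
    _ ≤ exp (3 / 2 - ν / 8) := by
        gcongr
        nlinarith

/-- There exist constants `C > 0`, `c > 0` and `ν₀ ≥ 1` such that for every `ν ≥ ν₀`
and every `r` with `0 < r ≤ ν/2`, one has `|J_ν(r)| ≤ C · e^{−c(ν + r)}`. -/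
theorem besselJ_small_argument_decay :
    ∃ C : ℝ, 0 < C ∧ ∃ c : ℝ, 0 < c ∧ ∃ ν₀ : ℝ, 1 ≤ ν₀ ∧
      ∀ ν : ℝ, ν₀ ≤ ν → ∀ r : ℝ, 0 < r → r ≤ ν / 2 →
        ‖besselJ ν r‖ ≤ C * Real.exp (-(c * (ν + r))) := by
  refine ⟨2 * exp (3 / 2), by positivity, 1 / 12, by norm_num, 1, le_rfl, fun ν hν r hr hrν => ?_⟩
  calc ‖besselJ ν r‖ ≤ 2 * |(r / 2) ^ ν / (Gamma (ν + 1 / 2) * Gamma (1 / 2))| :=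
        norm_besselJ_le (by linarith) r
    _ = 2 * ((r / 2) ^ ν / (Gamma (ν + 1 / 2) * Gamma (1 / 2))) := by
        rw [abs_of_nonneg (by positivity)]
    _ ≤ 2 * exp (3 / 2 - ν / 8) := by
        grw [besselJ_prefactor_le (by linarith) hr.le hrν, exp_mul_sqrt_div_four_rpow_le (by linarith)]
    _ ≤ 2 * exp (3 / 2) * exp (-(1 / 12 * (ν + r))) := by
        rw [mul_assoc, ← exp_add]
        gcongr
        linarith
end

section
/- Weighted Hardy inequality: let w : (0,∞) → ℝ be twice continuously differentiable with w(r) ≥ 0, w'(r) ≤ 0, and r·( w'(r)² + 2·w(r)·w''(r) ) ≥ 2·w(r)·w'(r) for all r > 0. Let g : (0,∞) → ℂ be continuously differentiable with lim_{r→0⁺} g(r) = 0. Then ∫_{0}^{∞} w(r)² · |g(r)|² / r² dr ≤ 4 · ∫_{0}^{∞} w(r)² · |g'(r)|² dr. -/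
/-!
Put `φ(r) = w(r)² ‖g(r)‖² / r`. Expanding `‖g/r - 2g'‖² ≥ 0` gives the pointwise bound
`w² ‖g‖² / r² - 4 w² ‖g'‖² ≤ -2 φ' + 4 w w' ‖g‖² / r ≤ -2 φ'`, which integrates to
`∫ₐᵇ w² ‖g‖² / r² ≤ 2 φ(a) + 4 ∫ₐᵇ w² ‖g'‖²`. Since `w` is nonincreasing and `g(0⁺) = 0`,
`w(a) ‖g(a)‖ ≤ ∫₀ᵃ w ‖g'‖`, so Cauchy–Schwarz gives `φ(a) ≤ ∫₀ᵃ w² ‖g'‖²`; hence every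
`∫ₐᵇ w² ‖g‖² / r²` is at most `4 ∫₀ᵇ w² ‖g'‖²`, and `a → 0`, `b → ∞` finishes.
-/

open MeasureTheory Set Filter Topology
open scoped ENNReal RealInnerProductSpace

theorem sq_integral_le_measureReal_mul_integral_sq {α : Type*} [MeasurableSpace α]
    {μ : Measure α} [IsFiniteMeasure μ] {f : α → ℝ} (hf : Integrable f μ)
    (hf2 : Integrable (fun x => f x ^ 2) μ) :
    (∫ x, f x ∂μ) ^ 2 ≤ μ.real univ * ∫ x, f x ^ 2 ∂μ := by
  rcases eq_zero_or_neZero μ with rfl | _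
  · simp
  have hμ : 0 < μ.real univ := measureReal_univ_pos
  have jensen := (even_two.convexOn_pow (𝕜 := ℝ)).map_average_le (continuousOn_pow 2)
    isClosed_univ (by simp) hf hf2
  simp only [average_eq, smul_eq_mul] at jensen
  rw [mul_pow, inv_pow, ← div_eq_inv_mul, ← div_eq_inv_mul, div_le_div_iff₀ (by positivity) hμ]
    at jensen
  nlinarith

theorem sq_intervalIntegral_le_mul_integral_sq {u : ℝ → ℝ} {a b : ℝ} (hab : a ≤ b)
    (hu : ContinuousOn u (Icc a b)) :
    (∫ x in a..b, u x) ^ 2 ≤ (b - a) * ∫ x in a..b, u x ^ 2 := by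
  simp only [intervalIntegral.integral_of_le hab]
  have hvol : (volume.restrict (Ioc a b)).real univ = b - a := by
    simp [Real.volume_real_Ioc_of_le hab]
  rw [← hvol]
  exact sq_integral_le_measureReal_mul_integral_sq
    (hu.integrableOn_Icc.mono_set Ioc_subset_Icc_self)
    ((hu.pow 2).integrableOn_Icc.mono_set Ioc_subset_Icc_self)

theorem setLIntegral_Ioi_le_of_forall_Ioc_le {a : ℝ} {f : ℝ → ℝ≥0∞} {C : ℝ≥0∞}
    (h : ∀ b c, a < b → b ≤ c → ∫⁻ x in Ioc b c, f x ≤ C) : ∫⁻ x in Ioi a, f x ≤ C := by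
  have hcover : Ioi a = ⋃ n : ℕ, Ioc (a + 1 / (n + 1)) (a + n) := by
    ext x
    simp only [mem_Ioi, mem_iUnion, mem_Ioc]
    constructor
    · intro hx
      obtain ⟨n, hn1, hn2⟩ := ((tendsto_one_div_add_atTop_nhds_zero_nat.eventually
        (gt_mem_nhds (sub_pos.2 hx))).and (tendsto_natCast_atTop_atTop.eventually_ge_atTop
        (x - a))).exists
      exact ⟨n, by linarith, by linarith⟩
    · rintro ⟨n, hn, -⟩
      exact lt_of_le_of_lt (le_add_of_nonneg_right (by positivity)) hn
  have hmono : Monotone fun n : ℕ => Ioc (a + 1 / (n + 1)) (a + n) := fun m n hmn =>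
    Ioc_subset_Ioc (by gcongr) (by gcongr)
  rw [hcover, setLIntegral_iUnion_of_directed _ hmono.directed_le]
  refine iSup_le fun n => ?_
  rcases le_or_gt (a + 1 / (n + 1)) (a + n) with hn | hn
  · exact h _ _ (lt_add_of_pos_right a (by positivity)) hn
  · rw [Ioc_eq_empty_of_le hn.le, Measure.restrict_empty, lintegral_zero_measure]
    exact zero_le

section InnerProductSpace

variable {E : Type*} [NormedAddCommGroup E] [InnerProductSpace ℝ E]

theorem weighted_hardy_integrand_le {r W W' : ℝ} (hr : 0 < r) (hW : 0 ≤ W) (hW' : W' ≤ 0)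
    (z z' : E) :
    W ^ 2 * ‖z‖ ^ 2 / r ^ 2 - 4 * (W ^ 2 * ‖z'‖ ^ 2) ≤
      -2 * ((2 * W * W' * ‖z‖ ^ 2 + W ^ 2 * (2 * ⟪z, z'⟫)) / r - W ^ 2 * ‖z‖ ^ 2 / r ^ 2) := by
  have hsq : 0 ≤ ‖z‖ ^ 2 / r ^ 2 - 4 * ⟪z, z'⟫ / r + 4 * ‖z'‖ ^ 2 := by
    have h := sq_nonneg ‖r⁻¹ • z - (2 : ℝ) • z'‖
    rw [norm_sub_sq_real, norm_smul, norm_smul, real_inner_smul_left, real_inner_smul_right,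
      Real.norm_of_nonneg (inv_nonneg.2 hr.le), Real.norm_two] at h
    exact h.trans_eq (by ring)
  have hW'r : 0 ≤ W * -W' * ‖z‖ ^ 2 / r := by have := neg_nonneg.2 hW'; positivity
  rw [← sub_nonneg]
  exact (add_nonneg (mul_nonneg (sq_nonneg W) hsq) (mul_nonneg zero_le_four hW'r)).trans_eq
    (by ring)

theorem hasDerivAt_sq_mul_norm_sq_div {w : ℝ → ℝ} {g : ℝ → E} {W' r : ℝ} {z' : E}
    (hw : HasDerivAt w W' r) (hg : HasDerivAt g z' r) (hr : r ≠ 0) :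
    HasDerivAt (fun x => w x ^ 2 * ‖g x‖ ^ 2 / x)
      ((2 * w r * W' * ‖g r‖ ^ 2 + w r ^ 2 * (2 * ⟪g r, z'⟫)) / r - w r ^ 2 * ‖g r‖ ^ 2 / r ^ 2)
      r := by
  refine (((hw.pow 2).mul hg.norm_sq).div (hasDerivAt_id r) hr).congr_deriv ?_
  simp only [Pi.pow_apply, Pi.mul_apply, id]
  field_simp
  ring

section WeightedHardy

variable {w w' : ℝ → ℝ} {g g' : ℝ → E}
  (hw : ∀ r ∈ Ioi (0 : ℝ), HasDerivAt w (w' r) r) (hw_nonneg : ∀ r ∈ Ioi (0 : ℝ), 0 ≤ w r)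
  (hw'_nonpos : ∀ r ∈ Ioi (0 : ℝ), w' r ≤ 0) (hg : ∀ r ∈ Ioi (0 : ℝ), HasDerivAt g (g' r) r)
  (hg'c : ContinuousOn g' (Ioi 0))
include hw hw_nonneg hw'_nonpos hg hg'c

theorem intervalIntegral_weighted_hardy_le {a b : ℝ} (ha : 0 < a) (hab : a ≤ b) :
    ∫ r in a..b, w r ^ 2 * ‖g r‖ ^ 2 / r ^ 2 ≤
      2 * (w a ^ 2 * ‖g a‖ ^ 2 / a) + 4 * ∫ r in a..b, w r ^ 2 * ‖g' r‖ ^ 2 := by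
  have hpos : Icc a b ⊆ Ioi 0 := fun r hr => ha.trans_le hr.1
  have hwc := HasDerivAt.continuousOn hw
  have hF : IntegrableOn (fun r => w r ^ 2 * ‖g r‖ ^ 2 / r ^ 2) (Icc a b) :=
    ((hwc.pow 2).mul ((HasDerivAt.continuousOn hg).norm.pow 2)).div (continuousOn_id.pow 2)
      (fun r hr => pow_ne_zero 2 (ne_of_gt hr)) |>.mono hpos |>.integrableOn_Icc
  have hH : IntegrableOn (fun r => w r ^ 2 * ‖g' r‖ ^ 2) (Icc a b) :=
    ((hwc.pow 2).mul (hg'c.norm.pow 2)).mono hpos |>.integrableOn_Icc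
  have hderiv : ∀ r ∈ Icc a b, HasDerivAt (fun x => -2 * (w x ^ 2 * ‖g x‖ ^ 2 / x))
      (-2 * ((2 * w r * w' r * ‖g r‖ ^ 2 + w r ^ 2 * (2 * ⟪g r, g' r⟫)) / r
        - w r ^ 2 * ‖g r‖ ^ 2 / r ^ 2)) r := fun r hr =>
    (hasDerivAt_sq_mul_norm_sq_div (hw r (hpos hr)) (hg r (hpos hr)) (hpos hr).ne').const_mul _
  have key := intervalIntegral.integral_le_sub_of_hasDeriv_right_of_le hab
    (φ := fun r => w r ^ 2 * ‖g r‖ ^ 2 / r ^ 2 - 4 * (w r ^ 2 * ‖g' r‖ ^ 2))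
    (HasDerivAt.continuousOn hderiv)
    (fun r hr => (hderiv r (Ioo_subset_Icc_self hr)).hasDerivWithinAt)
    (hF.sub (hH.const_mul 4))
    (fun r hr => weighted_hardy_integrand_le (hpos (Ioo_subset_Icc_self hr))
      (hw_nonneg r (hpos (Ioo_subset_Icc_self hr)))
      (hw'_nonpos r (hpos (Ioo_subset_Icc_self hr))) (g r) (g' r))
  rw [intervalIntegral.integral_sub, intervalIntegral.integral_const_mul] at key
  · have : 0 ≤ w b ^ 2 * ‖g b‖ ^ 2 / b := by
      have : 0 < b := ha.trans_le hab
      positivity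
    linarith
  · exact (intervalIntegrable_iff_integrableOn_Icc_of_le hab).2 hF
  · exact ((intervalIntegrable_iff_integrableOn_Icc_of_le hab).2 hH).const_mul 4

variable [CompleteSpace E]

theorem sq_mul_norm_sub_le_mul_intervalIntegral {e a : ℝ} (he : 0 < e) (hea : e ≤ a) :
    (w a * ‖g a - g e‖) ^ 2 ≤ (a - e) * ∫ r in e..a, w r ^ 2 * ‖g' r‖ ^ 2 := by
  have hpos : Icc e a ⊆ Ioi 0 := fun r hr => he.trans_le hr.1
  have ha : a ∈ Ioi (0 : ℝ) := hpos ⟨hea, le_rfl⟩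
  have hwc : ContinuousOn w (Ioi 0) := HasDerivAt.continuousOn hw
  have hanti : AntitoneOn w (Ioi 0) := antitoneOn_of_hasDerivWithinAt_nonpos (convex_Ioi 0) hwc
    (fun r hr => (hw r (interior_subset hr)).hasDerivWithinAt)
    (fun r hr => hw'_nonpos r (interior_subset hr))
  have hg'int : IntervalIntegrable g' volume e a := (hg'c.mono hpos).intervalIntegrable_of_Icc hea
  have hftc : ∫ r in e..a, g' r = g a - g e :=
    intervalIntegral.integral_eq_sub_of_hasDerivAt
      (fun r hr => hg r (hpos (by rwa [uIcc_of_le hea] at hr))) hg'int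
  have hwg'c : ContinuousOn (fun r => w r * ‖g' r‖) (Icc e a) :=
    (hwc.mul hg'c.norm).mono hpos
  have hbound : w a * ‖g a - g e‖ ≤ ∫ r in e..a, w r * ‖g' r‖ :=
    calc w a * ‖g a - g e‖ ≤ w a * ∫ r in e..a, ‖g' r‖ := by
          rw [← hftc]
          exact mul_le_mul_of_nonneg_left
            (intervalIntegral.norm_integral_le_integral_norm hea) (hw_nonneg a ha)
      _ = ∫ r in e..a, w a * ‖g' r‖ := (intervalIntegral.integral_const_mul _ _).symm
      _ ≤ ∫ r in e..a, w r * ‖g' r‖ :=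
          intervalIntegral.integral_mono_on hea (hg'int.norm.const_mul _)
            (hwg'c.intervalIntegrable_of_Icc hea) fun r hr =>
              mul_le_mul_of_nonneg_right (hanti (hpos hr) ha hr.2) (norm_nonneg _)
  calc (w a * ‖g a - g e‖) ^ 2 ≤ (∫ r in e..a, w r * ‖g' r‖) ^ 2 :=
        pow_le_pow_left₀ (mul_nonneg (hw_nonneg a ha) (norm_nonneg _)) hbound 2
    _ ≤ (a - e) * ∫ r in e..a, (w r * ‖g' r‖) ^ 2 :=
        sq_intervalIntegral_le_mul_integral_sq hea hwg'c
    _ = (a - e) * ∫ r in e..a, w r ^ 2 * ‖g' r‖ ^ 2 := by simp only [mul_pow]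

theorem ofReal_sq_mul_norm_sq_div_le_lintegral (hg0 : Tendsto g (𝓝[>] 0) (𝓝 0)) {a : ℝ}
    (ha : 0 < a) :
    ENNReal.ofReal (w a ^ 2 * ‖g a‖ ^ 2 / a) ≤
      ∫⁻ r in Ioc 0 a, ENNReal.ofReal (w r ^ 2 * ‖g' r‖ ^ 2) := by
  have hlim : Tendsto (fun e => ENNReal.ofReal ((w a * ‖g a - g e‖) ^ 2 / a)) (𝓝[>] 0)
      (𝓝 (ENNReal.ofReal (w a ^ 2 * ‖g a‖ ^ 2 / a))) := by
    simpa [mul_pow] using ENNReal.tendsto_ofReal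
      ((((tendsto_const_nhds (x := g a)).sub hg0).norm.const_mul (w a)).pow 2 |>.div_const a)
  refine le_of_tendsto hlim ?_
  filter_upwards [Ioo_mem_nhdsGT ha] with e ⟨he, hea⟩
  have hH : IntegrableOn (fun r => w r ^ 2 * ‖g' r‖ ^ 2) (Ioc e a) :=
    (((HasDerivAt.continuousOn hw).pow 2).mul (hg'c.norm.pow 2)).mono
      (fun r hr => he.trans_le hr.1) |>.integrableOn_Icc.mono_set Ioc_subset_Icc_self
  have hI : 0 ≤ ∫ r in e..a, w r ^ 2 * ‖g' r‖ ^ 2 :=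
    intervalIntegral.integral_nonneg hea.le fun r _ => by positivity
  calc ENNReal.ofReal ((w a * ‖g a - g e‖) ^ 2 / a)
      ≤ ENNReal.ofReal (∫ r in e..a, w r ^ 2 * ‖g' r‖ ^ 2) := by
        refine ENNReal.ofReal_le_ofReal ((div_le_iff₀' ha).2 ?_)
        exact (sq_mul_norm_sub_le_mul_intervalIntegral hw hw_nonneg hw'_nonpos hg hg'c he
          hea.le).trans (mul_le_mul_of_nonneg_right (by linarith) hI)
    _ = ∫⁻ r in Ioc e a, ENNReal.ofReal (w r ^ 2 * ‖g' r‖ ^ 2) := by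
        rw [intervalIntegral.integral_of_le hea.le,
          ofReal_integral_eq_lintegral_ofReal hH (ae_of_all _ fun _ => by positivity)]
    _ ≤ ∫⁻ r in Ioc 0 a, ENNReal.ofReal (w r ^ 2 * ‖g' r‖ ^ 2) :=
        lintegral_mono_set (Ioc_subset_Ioc_left he.le)

theorem lintegral_Ioc_weighted_hardy_le (hg0 : Tendsto g (𝓝[>] 0) (𝓝 0)) {a b : ℝ} (ha : 0 < a)
    (hab : a ≤ b) :
    ∫⁻ r in Ioc a b, ENNReal.ofReal (w r ^ 2 * ‖g r‖ ^ 2 / r ^ 2) ≤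
      4 * ∫⁻ r in Ioc 0 b, ENNReal.ofReal (w r ^ 2 * ‖g' r‖ ^ 2) := by
  have hpos : Icc a b ⊆ Ioi 0 := fun r hr => ha.trans_le hr.1
  have hwc := HasDerivAt.continuousOn hw
  have hF : IntegrableOn (fun r => w r ^ 2 * ‖g r‖ ^ 2 / r ^ 2) (Ioc a b) :=
    ((hwc.pow 2).mul ((HasDerivAt.continuousOn hg).norm.pow 2)).div (continuousOn_id.pow 2)
      (fun r hr => pow_ne_zero 2 (ne_of_gt hr)) |>.mono hpos |>.integrableOn_Icc.mono_set
        Ioc_subset_Icc_self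
  have hH : IntegrableOn (fun r => w r ^ 2 * ‖g' r‖ ^ 2) (Ioc a b) :=
    ((hwc.pow 2).mul (hg'c.norm.pow 2)).mono hpos |>.integrableOn_Icc.mono_set Ioc_subset_Icc_self
  set H := ∫⁻ r in Ioc a b, ENNReal.ofReal (w r ^ 2 * ‖g' r‖ ^ 2)
  set B := ∫⁻ r in Ioc 0 a, ENNReal.ofReal (w r ^ 2 * ‖g' r‖ ^ 2)
  have hB := ofReal_sq_mul_norm_sq_div_le_lintegral hw hw_nonneg hw'_nonpos hg hg'c hg0 ha
  calc ∫⁻ r in Ioc a b, ENNReal.ofReal (w r ^ 2 * ‖g r‖ ^ 2 / r ^ 2)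
      = ENNReal.ofReal (∫ r in a..b, w r ^ 2 * ‖g r‖ ^ 2 / r ^ 2) := by
        rw [intervalIntegral.integral_of_le hab,
          ofReal_integral_eq_lintegral_ofReal hF (ae_of_all _ fun _ => by positivity)]
    _ ≤ ENNReal.ofReal (2 * (w a ^ 2 * ‖g a‖ ^ 2 / a)
          + 4 * ∫ r in a..b, w r ^ 2 * ‖g' r‖ ^ 2) :=
        ENNReal.ofReal_le_ofReal
          (intervalIntegral_weighted_hardy_le hw hw_nonneg hw'_nonpos hg hg'c ha hab)
    _ ≤ 2 * B + 4 * H := by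
        refine ENNReal.ofReal_add_le.trans (add_le_add ?_ ?_)
        · rw [ENNReal.ofReal_mul zero_le_two, ENNReal.ofReal_ofNat]
          exact mul_le_mul_right hB 2
        · rw [ENNReal.ofReal_mul zero_le_four, ENNReal.ofReal_ofNat,
            intervalIntegral.integral_of_le hab,
            ofReal_integral_eq_lintegral_ofReal hH (ae_of_all _ fun _ => by positivity)]
    _ ≤ 4 * (B + H) := by
        rw [mul_add]
        gcongr
        norm_num
    _ = 4 * ∫⁻ r in Ioc 0 b, ENNReal.ofReal (w r ^ 2 * ‖g' r‖ ^ 2) := by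
        rw [← lintegral_union measurableSet_Ioc (Ioc_disjoint_Ioc_of_le le_rfl),
          Ioc_union_Ioc_eq_Ioc ha.le hab]

end WeightedHardy

end InnerProductSpace

theorem weighted_hardy_inequality_general
    (w w' : ℝ → ℝ) (g g' : ℝ → ℂ)
    (hw1 : ∀ r ∈ Set.Ioi (0 : ℝ), HasDerivAt w (w' r) r)
    (hw_nonneg : ∀ r ∈ Set.Ioi (0 : ℝ), 0 ≤ w r)
    (hw'_nonpos : ∀ r ∈ Set.Ioi (0 : ℝ), w' r ≤ 0)
    (hg : ∀ r ∈ Set.Ioi (0 : ℝ), HasDerivAt g (g' r) r)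
    (hg'c : ContinuousOn g' (Set.Ioi 0))
    (hg0 : Filter.Tendsto g (nhdsWithin 0 (Set.Ioi 0)) (nhds 0)) :
    (∫⁻ r in Set.Ioi (0 : ℝ), ENNReal.ofReal ((w r) ^ 2 * ‖g r‖ ^ 2 / r ^ 2))
      ≤ 4 * ∫⁻ r in Set.Ioi (0 : ℝ), ENNReal.ofReal ((w r) ^ 2 * ‖g' r‖ ^ 2) :=
  setLIntegral_Ioi_le_of_forall_Ioc_le fun _ _ ha hab =>
    (lintegral_Ioc_weighted_hardy_le hw1 hw_nonneg hw'_nonpos hg hg'c hg0 ha hab).trans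
      (mul_le_mul_right (lintegral_mono_set Ioc_subset_Ioi_self) 4)

/-- Weighted Hardy inequality: if `w : (0,∞) → ℝ` is twice continuously
differentiable with `w ≥ 0`, `w' ≤ 0` and `r(w'² + 2ww'') ≥ 2ww'` on `(0,∞)`, and
`g : (0,∞) → ℂ` is continuously differentiable with `g(r) → 0` as `r → 0⁺`, then
`∫_0^∞ w² |g|²/r² dr ≤ 4 ∫_0^∞ w² |g'|² dr` (in the extended-real sense). -/
theorem weighted_hardy_inequality
    (w w' w'' : ℝ → ℝ) (g g' : ℝ → ℂ)
    (hw1 : ∀ r ∈ Set.Ioi (0 : ℝ), HasDerivAt w (w' r) r)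
    (hw2 : ∀ r ∈ Set.Ioi (0 : ℝ), HasDerivAt w' (w'' r) r)
    (hw2c : ContinuousOn w'' (Set.Ioi 0))
    (hw_nonneg : ∀ r ∈ Set.Ioi (0 : ℝ), 0 ≤ w r)
    (hw'_nonpos : ∀ r ∈ Set.Ioi (0 : ℝ), w' r ≤ 0)
    (hw_cond : ∀ r ∈ Set.Ioi (0 : ℝ),
      2 * w r * w' r ≤ r * ((w' r) ^ 2 + 2 * w r * w'' r))
    (hg : ∀ r ∈ Set.Ioi (0 : ℝ), HasDerivAt g (g' r) r)
    (hg'c : ContinuousOn g' (Set.Ioi 0))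
    (hg0 : Filter.Tendsto g (nhdsWithin 0 (Set.Ioi 0)) (nhds 0)) :
    (∫⁻ r in Set.Ioi (0 : ℝ), ENNReal.ofReal ((w r) ^ 2 * ‖g r‖ ^ 2 / r ^ 2))
      ≤ 4 * ∫⁻ r in Set.Ioi (0 : ℝ), ENNReal.ofReal ((w r) ^ 2 * ‖g' r‖ ^ 2) :=
  weighted_hardy_inequality_general w w' g g' hw1 hw_nonneg hw'_nonpos hg hg'c hg0
end

section
/- Let τ > 0 and let g : (0,∞) → ℂ be continuously differentiable with lim_{r→0⁺} g(r) = 0. Then ∫_{0}^{∞} e^{−2rτ} (1 + 2rτ) · |g(r)|² / r² dr ≤ 4 · ∫_{0}^{∞} e^{−2rτ} (1 + 2rτ) · |g'(r)|² dr. -/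
/-!
For a weight `w ≥ 0` with `w' ≤ 0`, put `Φ(x) = w(x)‖g(x)‖²/x`, `X = ‖g(x)‖/x`, `Y = ‖g'(x)‖`.
Cauchy–Schwarz on `⟪g, g'⟫` gives `Φ' ≤ w (2XY - X²)`. As `2XY - X² ≤ 2Y² - X²/2`, integrating
over `[a, b]` gives `∫ₐᵇ w‖g‖²/x² ≤ 2Φ(a) + 4∫ₐᵇ w‖g'‖²`. As `2XY - X² ≤ Y²`, the same argument
for `g - g(δ)` on `[δ, a]`, with `δ → 0`, gives `Φ(a) ≤ ∫₀ᵃ w‖g'‖²`; when the right-hand side of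
the inequality is finite this tends to `0` with `a`. The weight `e^{-2τx}(1 + 2τx)` has derivative
`-4τ²x e^{-2τx} ≤ 0`.
-/

open MeasureTheory Set Filter Topology

open scoped ENNReal RealInnerProductSpace

theorem Ioi_zero_eq_iUnion_Ioc : Ioi (0 : ℝ) = ⋃ n : ℕ, Ioc ((n : ℝ) + 1)⁻¹ (n + 1) := by
  ext x
  simp only [mem_Ioi, mem_iUnion, mem_Ioc]
  refine ⟨fun hx => ?_, fun ⟨n, hn, _⟩ => lt_trans (by positivity) hn⟩
  obtain ⟨n, hn⟩ := exists_nat_one_div_lt hx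
  obtain ⟨m, hm⟩ := exists_nat_ge x
  refine ⟨max n m, lt_of_le_of_lt ?_ (one_div (n + 1 : ℝ) ▸ hn), hm.trans ?_⟩
  · gcongr; exact_mod_cast le_max_left n m
  · have : (m : ℝ) ≤ max n m := by exact_mod_cast le_max_right n m
    linarith

theorem lintegral_Ioi_zero_le_of_forall_Ioc_le {F c : ℝ → ℝ≥0∞} {C : ℝ≥0∞}
    (hc : Tendsto c (𝓝[>] 0) (𝓝 0))
    (hF : ∀ a b, 0 < a → a ≤ b → ∫⁻ x in Ioc a b, F x ≤ c a + C) :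
    ∫⁻ x in Ioi 0, F x ≤ C := by
  have hmono : Monotone fun n : ℕ => Ioc ((n : ℝ) + 1)⁻¹ (n + 1) := fun m n hmn =>
    Ioc_subset_Ioc (by gcongr) (by gcongr)
  rw [Ioi_zero_eq_iUnion_Ioc, setLIntegral_iUnion_of_directed _ hmono.directed_le]
  refine iSup_le fun n => ge_of_tendsto (by simpa using hc.add_const C) ?_
  filter_upwards [Ioc_mem_nhdsGT (show (0 : ℝ) < ((n : ℝ) + 1)⁻¹ by positivity)] with a ha
  refine (lintegral_mono_set (Ioc_subset_Ioc_left ha.2)).trans (hF a _ ha.1 (ha.2.trans ?_))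
  exact inv_le_one_of_one_le₀ (by simp) |>.trans (by simp)

theorem tendsto_setLIntegral_Ioc_zero {f : ℝ → ℝ≥0∞} (hf : ∫⁻ x in Ioi 0, f x ≠ ∞) :
    Tendsto (fun a => ∫⁻ x in Ioc 0 a, f x) (𝓝[>] 0) (𝓝 0) := by
  have hvol : Tendsto (fun a : ℝ => volume.restrict (Ioi 0) (Ioc 0 a)) (𝓝[>] 0) (𝓝 0) := by
    simp only [Measure.restrict_apply measurableSet_Ioc,
      inter_eq_left.2 Ioc_subset_Ioi_self, Real.volume_Ioc, sub_zero]
    simpa using (ENNReal.tendsto_ofReal (tendsto_id (x := 𝓝 (0 : ℝ)))).mono_left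
      nhdsWithin_le_nhds
  convert tendsto_setLIntegral_zero hf hvol using 2 with a
  rw [Measure.restrict_restrict measurableSet_Ioc, inter_eq_left.2 Ioc_subset_Ioi_self]

section WeightedHardy

variable {E : Type*} [NormedAddCommGroup E] {w w' : ℝ → ℝ} {g g' : ℝ → E}

theorem continuousOn_weighted_norm_sq_div (hw : ContinuousOn w (Ioi 0))
    (hg : ContinuousOn g (Ioi 0)) :
    ContinuousOn (fun x => w x * ‖g x‖ ^ 2 / x ^ 2) (Ioi 0) :=
  (hw.mul (hg.norm.pow 2)).div (continuousOn_id.pow 2) fun _ hx => pow_ne_zero 2 (ne_of_gt hx)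

variable [InnerProductSpace ℝ E]

theorem hasDerivAt_weighted_norm_sq_div {x : ℝ} (hx : 0 < x) (hw : HasDerivAt w (w' x) x)
    (hg : HasDerivAt g (g' x) x) :
    HasDerivAt (fun y => w y * ‖g y‖ ^ 2 / y)
      (w' x * ‖g x‖ ^ 2 / x + w x * (2 * ⟪g x, g' x⟫) / x - w x * ‖g x‖ ^ 2 / x ^ 2) x := by
  refine ((hw.mul hg.norm_sq).div (hasDerivAt_id x) hx.ne').congr_deriv ?_
  simp only [id, Pi.mul_apply]
  field_simp

theorem weighted_norm_sq_div_deriv_le {x : ℝ} (hx : 0 < x) (hw' : w' x ≤ 0) (hw0 : 0 ≤ w x) :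
    w' x * ‖g x‖ ^ 2 / x + w x * (2 * ⟪g x, g' x⟫) / x - w x * ‖g x‖ ^ 2 / x ^ 2
      ≤ w x * (2 * (‖g x‖ / x) * ‖g' x‖ - (‖g x‖ / x) ^ 2) := by
  have hw'term : w' x * ‖g x‖ ^ 2 / x ≤ 0 :=
    div_nonpos_of_nonpos_of_nonneg (mul_nonpos_of_nonpos_of_nonneg hw' (by positivity)) hx.le
  have hinner : w x * (2 * ⟪g x, g' x⟫) / x ≤ w x * (2 * (‖g x‖ * ‖g' x‖)) / x := by
    gcongr
    exact real_inner_le_norm _ _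
  calc _ ≤ w x * (2 * (‖g x‖ * ‖g' x‖)) / x - w x * ‖g x‖ ^ 2 / x ^ 2 := by linarith
    _ = _ := by field_simp

variable (hw : ∀ x ∈ Ioi 0, HasDerivAt w (w' x) x) (hw' : ∀ x ∈ Ioi 0, w' x ≤ 0)
  (hw0 : ∀ x ∈ Ioi 0, 0 ≤ w x) (hg : ∀ x ∈ Ioi 0, HasDerivAt g (g' x) x)
include hw hw' hw0 hg

theorem weighted_norm_sq_div_sub_le_integral {a b : ℝ} (ha : 0 < a) (hab : a ≤ b) {φ : ℝ → ℝ}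
    (hφ : IntegrableOn φ (Icc a b))
    (hφle : ∀ x ∈ Ioo a b, w x * (2 * (‖g x‖ / x) * ‖g' x‖ - (‖g x‖ / x) ^ 2) ≤ φ x) :
    w b * ‖g b‖ ^ 2 / b - w a * ‖g a‖ ^ 2 / a ≤ ∫ x in a..b, φ x := by
  have hpos : ∀ x ∈ Icc a b, x ∈ Ioi 0 := fun x hx => ha.trans_le hx.1
  have hderiv x (hx : x ∈ Icc a b) :=
    hasDerivAt_weighted_norm_sq_div (hpos x hx) (hw x (hpos x hx)) (hg x (hpos x hx))
  refine intervalIntegral.sub_le_integral_of_hasDeriv_right_of_le hab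
    (fun x hx => (hderiv x hx).continuousAt.continuousWithinAt)
    (fun x hx => (hderiv x (Ioo_subset_Icc_self hx)).hasDerivWithinAt) hφ fun x hx => ?_
  have hx₀ := hpos x (Ioo_subset_Icc_self hx)
  exact (weighted_norm_sq_div_deriv_le hx₀ (hw' x hx₀) (hw0 x hx₀)).trans (hφle x hx)

theorem weighted_norm_sq_div_le_setIntegral (hg0 : Tendsto g (𝓝[>] 0) (𝓝 0)) {a : ℝ}
    (ha : 0 < a) (hint : IntegrableOn (fun x => w x * ‖g' x‖ ^ 2) (Ioc 0 a)) :
    w a * ‖g a‖ ^ 2 / a ≤ ∫ x in Ioc 0 a, w x * ‖g' x‖ ^ 2 := by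
  have hlim : Tendsto (fun δ => w a * ‖g a - g δ‖ ^ 2 / a) (𝓝[>] 0)
      (𝓝 (w a * ‖g a‖ ^ 2 / a)) := by
    simpa using (((tendsto_const_nhds.sub hg0).norm.pow 2).const_mul (w a)).div_const a
  refine le_of_tendsto hlim ?_
  filter_upwards [Ioo_mem_nhdsGT ha] with δ hδ
  have key := weighted_norm_sq_div_sub_le_integral (g := fun x => g x - g δ) hw hw' hw0
    (fun x hx => (hg x hx).sub_const (g δ)) hδ.1 hδ.2.le
    (hint.mono_set fun x hx => ⟨hδ.1.trans_le hx.1, hx.2⟩) fun x hx => by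
      have := hw0 x (hδ.1.trans hx.1)
      nlinarith [mul_nonneg this (sq_nonneg (‖g x - g δ‖ / x - ‖g' x‖))]
  calc _ ≤ _ := by simpa using key
    _ = ∫ x in Ioc δ a, w x * ‖g' x‖ ^ 2 := intervalIntegral.integral_of_le hδ.2.le
    _ ≤ _ := setIntegral_mono_set hint
        (ae_restrict_of_forall_mem measurableSet_Ioc fun x hx => by
          have := hw0 x hx.1
          positivity)
        (Ioc_subset_Ioc_left hδ.1.le).eventuallyLE

variable (hg'c : ContinuousOn g' (Ioi 0))
include hg'c

theorem intervalIntegral_weighted_hardy {a b : ℝ} (ha : 0 < a) (hab : a ≤ b) :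
    ∫ x in a..b, w x * ‖g x‖ ^ 2 / x ^ 2
      ≤ 2 * (w a * ‖g a‖ ^ 2 / a) + 4 * ∫ x in a..b, w x * ‖g' x‖ ^ 2 := by
  have hsub : Icc a b ⊆ Ioi 0 := fun x hx => ha.trans_le hx.1
  have hfc := (continuousOn_weighted_norm_sq_div (HasDerivAt.continuousOn hw)
    (HasDerivAt.continuousOn hg)).mono hsub
  have hhc : ContinuousOn (fun x => w x * ‖g' x‖ ^ 2) (Icc a b) :=
    ((HasDerivAt.continuousOn hw).mul (hg'c.norm.pow 2)).mono hsub
  have hf := hfc.intervalIntegrable_of_Icc (μ := volume) hab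
  have hh := hhc.intervalIntegrable_of_Icc (μ := volume) hab
  have key := weighted_norm_sq_div_sub_le_integral hw hw' hw0 hg ha hab
    (φ := fun x => 2 * (w x * ‖g' x‖ ^ 2) - 2⁻¹ * (w x * ‖g x‖ ^ 2 / x ^ 2))
    (((continuousOn_const.mul hhc).sub (continuousOn_const.mul hfc)).integrableOn_Icc) fun x hx => ?_
  · rw [intervalIntegral.integral_sub (hh.const_mul 2) (hf.const_mul 2⁻¹),
      intervalIntegral.integral_const_mul, intervalIntegral.integral_const_mul] at key
    have hb : 0 < b := hsub (right_mem_Icc.2 hab)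
    have := hw0 b hb
    have : 0 ≤ w b * ‖g b‖ ^ 2 / b := by positivity
    linarith
  · have hx₀ : 0 < x := hsub (Ioo_subset_Icc_self hx)
    have hwx := hw0 x hx₀
    have := mul_le_mul_of_nonneg_left
      (by nlinarith [sq_nonneg (‖g x‖ / x - 2 * ‖g' x‖)] :
        2 * (‖g x‖ / x) * ‖g' x‖ - (‖g x‖ / x) ^ 2
          ≤ 2 * ‖g' x‖ ^ 2 - 2⁻¹ * (‖g x‖ / x) ^ 2) hwx
    exact this.trans_eq (by field_simp)

theorem lintegral_weighted_hardy_Ioc (hg0 : Tendsto g (𝓝[>] 0) (𝓝 0)) {a b : ℝ} (ha : 0 < a)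
    (hab : a ≤ b) (hint : IntegrableOn (fun x => w x * ‖g' x‖ ^ 2) (Ioc 0 b)) :
    ∫⁻ x in Ioc a b, ENNReal.ofReal (w x * ‖g x‖ ^ 2 / x ^ 2)
      ≤ 2 * (∫⁻ x in Ioc 0 a, ENNReal.ofReal (w x * ‖g' x‖ ^ 2))
        + 4 * ∫⁻ x in Ioc a b, ENNReal.ofReal (w x * ‖g' x‖ ^ 2) := by
  have hnonneg {s : Set ℝ} (hs : s ⊆ Ioi 0) (hms : MeasurableSet s) {F : ℝ → ℝ}
      (hF : ∀ x ∈ Ioi 0, 0 ≤ F x) : 0 ≤ᵐ[volume.restrict s] F :=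
    ae_restrict_of_forall_mem hms fun x hx => hF x (hs hx)
  have hf0 x (hx : x ∈ Ioi 0) : 0 ≤ w x * ‖g x‖ ^ 2 / x ^ 2 := by
    have := hw0 x hx; positivity
  have hh0 x (hx : x ∈ Ioi 0) : 0 ≤ w x * ‖g' x‖ ^ 2 := by
    have := hw0 x hx; positivity
  have hsub : Ioc a b ⊆ Ioi 0 := fun x hx => ha.trans hx.1
  have hf : IntegrableOn (fun x => w x * ‖g x‖ ^ 2 / x ^ 2) (Ioc a b) :=
    ((continuousOn_weighted_norm_sq_div (HasDerivAt.continuousOn hw)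
      (HasDerivAt.continuousOn hg)).mono
      fun x hx => ha.trans_le hx.1).integrableOn_Icc.mono_set Ioc_subset_Icc_self
  have hint_a := hint.mono_set (Ioc_subset_Ioc_right hab)
  have hint_ab := hint.mono_set (Ioc_subset_Ioc_left ha.le)
  have hbdry := weighted_norm_sq_div_le_setIntegral hw hw' hw0 hg hg0 ha hint_a
  have hab_bound : ∫ x in Ioc a b, w x * ‖g x‖ ^ 2 / x ^ 2
      ≤ 2 * (w a * ‖g a‖ ^ 2 / a) + 4 * ∫ x in Ioc a b, w x * ‖g' x‖ ^ 2 := by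
    simpa only [intervalIntegral.integral_of_le hab] using
      intervalIntegral_weighted_hardy hw hw' hw0 hg hg'c ha hab
  have hh_a : 0 ≤ᵐ[volume.restrict (Ioc 0 a)] fun x => w x * ‖g' x‖ ^ 2 :=
    hnonneg Ioc_subset_Ioi_self measurableSet_Ioc hh0
  have hh_ab : 0 ≤ᵐ[volume.restrict (Ioc a b)] fun x => w x * ‖g' x‖ ^ 2 :=
    hnonneg hsub measurableSet_Ioc hh0
  calc _ = ENNReal.ofReal (∫ x in Ioc a b, w x * ‖g x‖ ^ 2 / x ^ 2) :=
        (ofReal_integral_eq_lintegral_ofReal hf (hnonneg hsub measurableSet_Ioc hf0)).symm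
    _ ≤ ENNReal.ofReal (2 * (∫ x in Ioc 0 a, w x * ‖g' x‖ ^ 2)
          + 4 * ∫ x in Ioc a b, w x * ‖g' x‖ ^ 2) := ENNReal.ofReal_le_ofReal (by linarith)
    _ = _ := by
      have := integral_nonneg_of_ae hh_a
      have := integral_nonneg_of_ae hh_ab
      rw [ENNReal.ofReal_add (by positivity) (by positivity),
        ENNReal.ofReal_mul (by norm_num), ENNReal.ofReal_mul (by norm_num),
        ofReal_integral_eq_lintegral_ofReal hint_a hh_a,
        ofReal_integral_eq_lintegral_ofReal hint_ab hh_ab, ENNReal.ofReal_ofNat,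
        ENNReal.ofReal_ofNat]

theorem lintegral_weighted_hardy (hg0 : Tendsto g (𝓝[>] 0) (𝓝 0)) :
    ∫⁻ x in Ioi 0, ENNReal.ofReal (w x * ‖g x‖ ^ 2 / x ^ 2)
      ≤ 4 * ∫⁻ x in Ioi 0, ENNReal.ofReal (w x * ‖g' x‖ ^ 2) := by
  rcases eq_or_ne (∫⁻ x in Ioi 0, ENNReal.ofReal (w x * ‖g' x‖ ^ 2)) ⊤ with hH | hH
  · simp [hH, ENNReal.mul_top]
  have hint : IntegrableOn (fun x => w x * ‖g' x‖ ^ 2) (Ioi 0) :=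
    ⟨((HasDerivAt.continuousOn hw).mul (hg'c.norm.pow 2)).aestronglyMeasurable measurableSet_Ioi,
      (hasFiniteIntegral_iff_ofReal (ae_restrict_of_forall_mem measurableSet_Ioi fun x hx => by
        have := hw0 x hx; positivity)).2 hH.lt_top⟩
  have hc := ENNReal.Tendsto.const_mul (tendsto_setLIntegral_Ioc_zero hH)
    (Or.inr (ENNReal.ofNat_ne_top : (2 : ℝ≥0∞) ≠ ⊤))
  rw [mul_zero] at hc
  refine lintegral_Ioi_zero_le_of_forall_Ioc_le hc fun a b ha hab => ?_
  refine (lintegral_weighted_hardy_Ioc hw hw' hw0 hg hg'c hg0 ha hab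
    (hint.mono_set Ioc_subset_Ioi_self)).trans ?_
  gcongr
  exact fun x hx => ha.trans hx.1

end WeightedHardy

theorem hasDerivAt_exp_mul_one_add (τ r : ℝ) :
    HasDerivAt (fun r => Real.exp (-2 * r * τ) * (1 + 2 * r * τ))
      (-(4 * τ ^ 2 * r * Real.exp (-2 * r * τ))) r := by
  have h1 : HasDerivAt (fun r => -2 * r * τ) (-2 * τ) r := by
    simpa using ((hasDerivAt_id r).const_mul (-2)).mul_const τ
  have h2 : HasDerivAt (fun r => 1 + 2 * r * τ) (2 * τ) r := by
    simpa using (((hasDerivAt_id r).const_mul 2).mul_const τ).const_add 1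
  exact (h1.exp.mul h2).congr_deriv (by ring)

/-- Weighted Hardy inequality with weight `w(r) = e^{−τr}(1+2rτ)^{1/2}`: for `τ > 0`
and `g : (0,∞) → ℂ` continuously differentiable with `g(r) → 0` as `r → 0⁺`,
`∫_0^∞ e^{−2rτ}(1+2rτ)|g(r)|²/r² dr ≤ 4 ∫_0^∞ e^{−2rτ}(1+2rτ)|g'(r)|² dr`
(in the extended-real sense). -/
theorem weighted_hardy_exponential (τ : ℝ) (hτ : 0 < τ) (g g' : ℝ → ℂ)
    (hg : ∀ r ∈ Set.Ioi (0 : ℝ), HasDerivAt g (g' r) r)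
    (hg'c : ContinuousOn g' (Set.Ioi 0))
    (hg0 : Filter.Tendsto g (nhdsWithin 0 (Set.Ioi 0)) (nhds 0)) :
    (∫⁻ r in Set.Ioi (0 : ℝ),
        ENNReal.ofReal (Real.exp (-2 * r * τ) * (1 + 2 * r * τ) * ‖g r‖ ^ 2 / r ^ 2))
      ≤ 4 * ∫⁻ r in Set.Ioi (0 : ℝ),
          ENNReal.ofReal (Real.exp (-2 * r * τ) * (1 + 2 * r * τ) * ‖g' r‖ ^ 2) :=
  lintegral_weighted_hardy (fun r _ => hasDerivAt_exp_mul_one_add τ r)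
    (fun r (hr : 0 < r) => neg_nonpos.2 (by positivity)) (fun r (hr : 0 < r) => by positivity)
    hg hg'c hg0
end
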